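/- For each β > 1, the function x ↦ Σ_{n=1}^∞ (2j_{β−1,n})² · exp(−(2j_{β−1,n})²·x), where (j_{β−1,n}) are the positive zeros of the Bessel function J_{β−1}, is a nonnegative measurable function on (0,∞) satisfying ∫₀^∞ min(1,x)·π(x) dx < ∞; i.e., it is the density of a Lévy measure of a subordinator. -/

import Mathlib

open MeasureTheory Set Filter

/-- Bessel function of the first kind,
`J_ν(x) = Σ_{k≥0} (−1)^k (x/2)^{ν+2k}/(k!·Γ(ν+k+1))` (for `x > 0`). -/
noncomputable def besselJ (ν x : ℝ) : ℝ :=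
  ∑' k : ℕ, (-1) ^ k * (x / 2) ^ (ν + 2 * (k:ℝ)) / ((k.factorial : ℝ) * Real.Gamma (ν + k + 1))

/-!
Each term `a e^{-a x}` of the series contributes `∫₀^∞ x · a e^{-a x} dx = 1/a` to the integral of
`x π(x) ≥ min(1, x) π(x)`, so by Tonelli the integral is at most `∑ 1/a_n`. With `a_n = (2 j_n)²`
and `j_n ≥ c n` this is dominated by `∑ 1/(4c²n²) < ∞`.
-/

lemma ENNReal.ofReal_tsum_le {ι : Type*} {f : ι → ℝ} (hf : ∀ i, 0 ≤ f i) :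
    ENNReal.ofReal (∑' i, f i) ≤ ∑' i, ENNReal.ofReal (f i) := by
  by_cases hs : Summable f
  · rw [ENNReal.ofReal_tsum_of_nonneg hf hs]
  · simp [tsum_eq_zero_of_not_summable hs]

lemma integrableOn_Ioi_mul_mul_exp_neg_mul {a : ℝ} (ha : 0 < a) :
    IntegrableOn (fun x => x * (a * Real.exp (-a * x))) (Ioi 0) := by
  have h := integrableOn_rpow_mul_exp_neg_mul_rpow (by norm_num : (-1:ℝ) < 1) one_pos ha
  simp only [Real.rpow_one] at h
  simpa only [IntegrableOn, mul_left_comm] using h.const_mul a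

lemma integral_Ioi_mul_mul_exp_neg_mul {a : ℝ} (ha : 0 < a) :
    ∫ x in Ioi (0:ℝ), x * (a * Real.exp (-a * x)) = a⁻¹ := by
  have hΓ := Real.integral_rpow_mul_exp_neg_mul_Ioi two_pos ha
  norm_num [Real.Gamma_two] at hΓ
  calc ∫ x in Ioi (0:ℝ), x * (a * Real.exp (-a * x))
      = a * ∫ x in Ioi (0:ℝ), x * Real.exp (-(a * x)) := by
        rw [← integral_const_mul]
        congr 1 with x
        ring_nf
    _ = a⁻¹ := by rw [hΓ]; field_simp

/-- At `a = 0` both sides vanish, since `0⁻¹ = 0`. -/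
lemma lintegral_Ioi_mul_mul_exp_neg_mul {a : ℝ} (ha : 0 ≤ a) :
    ∫⁻ x in Ioi (0:ℝ), ENNReal.ofReal (x * (a * Real.exp (-a * x))) = ENNReal.ofReal a⁻¹ := by
  rcases ha.eq_or_lt with rfl | ha
  · simp
  rw [← integral_Ioi_mul_mul_exp_neg_mul ha,
    ofReal_integral_eq_lintegral_ofReal (integrableOn_Ioi_mul_mul_exp_neg_mul ha)]
  filter_upwards [ae_restrict_mem measurableSet_Ioi] with x hx
  exact mul_nonneg (le_of_lt hx) (by positivity)

lemma ofReal_min_one_mul_tsum_le {a : ℕ → ℝ} (ha : ∀ n, 0 ≤ a n) {x : ℝ} (hx : 0 < x) :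
    ENNReal.ofReal (min 1 x * ∑' n, a n * Real.exp (-a n * x)) ≤
      ∑' n, ENNReal.ofReal (x * (a n * Real.exp (-a n * x))) := by
  have hterm : ∀ n, 0 ≤ a n * Real.exp (-a n * x) := fun n => by have := ha n; positivity
  calc ENNReal.ofReal (min 1 x * ∑' n, a n * Real.exp (-a n * x))
      ≤ ENNReal.ofReal (x * ∑' n, a n * Real.exp (-a n * x)) :=
        ENNReal.ofReal_le_ofReal (mul_le_mul_of_nonneg_right (min_le_right 1 x)
          (tsum_nonneg hterm))
    _ = ENNReal.ofReal x * ENNReal.ofReal (∑' n, a n * Real.exp (-a n * x)) :=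
        ENNReal.ofReal_mul hx.le
    _ ≤ ENNReal.ofReal x * ∑' n, ENNReal.ofReal (a n * Real.exp (-a n * x)) := by
        gcongr
        exact ENNReal.ofReal_tsum_le hterm
    _ = ∑' n, ENNReal.ofReal (x * (a n * Real.exp (-a n * x))) := by
        rw [← ENNReal.tsum_mul_left]
        exact tsum_congr fun n => (ENNReal.ofReal_mul hx.le).symm

theorem lintegral_min_one_mul_tsum_mul_exp_neg_mul_lt_top {a : ℕ → ℝ} (ha : ∀ n, 0 ≤ a n)
    (hs : Summable fun n => (a n)⁻¹) :
    ∫⁻ x in Ioi (0:ℝ), ENNReal.ofReal (min 1 x * ∑' n, a n * Real.exp (-a n * x)) < ⊤ :=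
  calc ∫⁻ x in Ioi (0:ℝ), ENNReal.ofReal (min 1 x * ∑' n, a n * Real.exp (-a n * x))
      ≤ ∫⁻ x in Ioi (0:ℝ), ∑' n, ENNReal.ofReal (x * (a n * Real.exp (-a n * x))) :=
        setLIntegral_mono' measurableSet_Ioi fun _ hx => ofReal_min_one_mul_tsum_le ha hx
    _ = ∑' n, ENNReal.ofReal (a n)⁻¹ := by
        rw [lintegral_tsum fun n => by fun_prop]
        exact tsum_congr fun n => lintegral_Ioi_mul_mul_exp_neg_mul (ha n)
    _ = ENNReal.ofReal (∑' n, (a n)⁻¹) :=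
        (ENNReal.ofReal_tsum_of_nonneg (fun n => inv_nonneg.2 (ha n)) hs).symm
    _ < ⊤ := ENNReal.ofReal_lt_top

lemma summable_inv_sq_of_linear_le {j : ℕ → ℝ} {c : ℝ} (hc : 0 < c)
    (hj : ∀ᶠ n in atTop, c * n ≤ j n) : Summable fun n => (j n ^ 2)⁻¹ := by
  refine ((Real.summable_nat_pow_inv.mpr one_lt_two).mul_left (c ^ 2)⁻¹)
    |>.of_norm_bounded_eventually_nat ?_
  filter_upwards [hj, eventually_gt_atTop 0] with n hn hn₀
  have hcn : 0 < c * n := by positivity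
  rw [norm_inv, norm_pow, Real.norm_eq_abs, sq_abs, ← mul_inv, ← mul_pow]
  exact inv_anti₀ (by positivity) (pow_le_pow_left₀ hcn.le hn 2)

theorem stmt12_general
    (j : ℕ → ℝ)
    (hgrowth : ∃ c > (0:ℝ), ∀ᶠ n in atTop, c * n ≤ j n)
    (π : ℝ → ℝ)
    (hπ : ∀ x : ℝ, π x =
      ∑' n : ℕ, (2 * j n) ^ 2 * Real.exp (-((2 * j n) ^ 2) * x)) :
    Measurable π ∧ (∀ x ∈ Ioi (0:ℝ), 0 ≤ π x) ∧
      (∫⁻ x in Ioi (0:ℝ), ENNReal.ofReal (min 1 x * π x)) < ⊤ := by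
  obtain ⟨c, hc, hj⟩ := hgrowth
  have hs : Summable fun n => ((2 * j n) ^ 2)⁻¹ :=
    summable_inv_sq_of_linear_le (mul_pos two_pos hc) (hj.mono fun n h => by linarith)
  obtain rfl : π = fun x => ∑' n, (2 * j n) ^ 2 * Real.exp (-((2 * j n) ^ 2) * x) := funext hπ
  exact ⟨Measurable.tsum fun n => by fun_prop, fun x _ => tsum_nonneg fun n => by positivity,
    lintegral_min_one_mul_tsum_mul_exp_neg_mul_lt_top (fun n => sq_nonneg _) hs⟩

theorem stmt12 (β : ℝ) (hβ : 1 < β)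
    (j : ℕ → ℝ) (hjpos : ∀ n, 0 < j n)
    (hzero : ∀ n, besselJ (β - 1) (j n) = 0)
    (hmono : StrictMono j)
    (hgrowth : ∃ c > (0:ℝ), ∀ᶠ n in atTop, c * n ≤ j n)
    (π : ℝ → ℝ)
    (hπ : ∀ x : ℝ, π x =
      ∑' n : ℕ, (2 * j n) ^ 2 * Real.exp (-((2 * j n) ^ 2) * x)) :
    Measurable π ∧ (∀ x ∈ Ioi (0:ℝ), 0 ≤ π x) ∧
      (∫⁻ x in Ioi (0:ℝ), ENNReal.ofReal (min 1 x * π x)) < ⊤ :=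
  stmt12_general j hgrowth π hπ
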